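/- arXiv:1406.1154 — 4 statements merged into one kernel-verified Lean document; each statement's English description precedes it below -/
import Mathlib

section
/- Let n be a natural number and let T : 𝔽₂ⁿ → 𝔽₂ⁿ be a map that preserves the Hamming distance, i.e., hammingDist (T v) (T v') = hammingDist v v' for all v, v' ∈ 𝔽₂ⁿ. Then there exists a permutation π of {0,...,n-1} such that for every v ∈ 𝔽₂ⁿ, T(v) = (v ∘ π) + T(0), i.e., for every coordinate i, (T v) i = v (π i) + (T 0) i. -/
private lemma zmod2_cases (a : ZMod 2) : a = 0 ∨ a = 1 := by revert a; decide

private lemma hdist_single (n : ℕ) (w : Fin n → ZMod 2) (j : Fin n) :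
    hammingDist w (Pi.single j 1) =
      if w j = 1 then hammingNorm w - 1 else hammingNorm w + 1 := by
  classical
  unfold hammingDist hammingNorm
  by_cases h : w j = 1
  · rw [if_pos h]
    have hset : ({i | w i ≠ (Pi.single j 1 : Fin n → ZMod 2) i} : Finset (Fin n)) =
        ({i | w i ≠ 0} : Finset (Fin n)).erase j := by
      ext i
      simp only [Finset.mem_filter, Finset.mem_erase, Finset.mem_univ, true_and]
      by_cases hij : i = j
      · subst hij
        simp [h]
      · simp [Pi.single_eq_of_ne hij, hij]
    rw [hset, Finset.card_erase_of_mem]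
    simp only [Finset.mem_filter, Finset.mem_univ, true_and]
    rw [h]; exact one_ne_zero
  · rw [if_neg h]
    have hw0 : w j = 0 := (zmod2_cases (w j)).resolve_right h
    have hset : ({i | w i ≠ (Pi.single j 1 : Fin n → ZMod 2) i} : Finset (Fin n)) =
        insert j ({i | w i ≠ 0} : Finset (Fin n)) := by
      ext i
      simp only [Finset.mem_filter, Finset.mem_insert, Finset.mem_univ, true_and]
      by_cases hij : i = j
      · subst hij
        simp [h, hw0]
      · simp [Pi.single_eq_of_ne hij, hij]
    rw [hset, Finset.card_insert_of_notMem]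
    simp [hw0]

private lemma norm_one_single (n : ℕ) (w : Fin n → ZMod 2) (h : hammingNorm w = 1) :
    ∃ k, w = Pi.single k 1 := by
  classical
  obtain ⟨k, hk⟩ := Finset.card_eq_one.mp h
  refine ⟨k, funext fun i => ?_⟩
  by_cases hik : i = k
  · subst hik
    have : i ∈ ({j | w j ≠ 0} : Finset (Fin n)) := hk ▸ Finset.mem_singleton_self i
    simp only [Finset.mem_filter, Finset.mem_univ, true_and] at this
    rw [Pi.single_eq_same]
    exact (zmod2_cases (w i)).resolve_left this
  · have : i ∉ ({j | w j ≠ 0} : Finset (Fin n)) := by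
      rw [hk]; simpa using hik
    simp only [Finset.mem_filter, Finset.mem_univ, true_and, not_not] at this
    rw [Pi.single_eq_of_ne hik, this]

private lemma norm_single (n : ℕ) (j : Fin n) :
    hammingNorm (Pi.single j 1 : Fin n → ZMod 2) = 1 := by
  have h := hdist_single n (0 : Fin n → ZMod 2) j
  rw [hammingDist_zero_left] at h
  simpa using h

theorem hamming_dist_preserving_is_permutation_plus_shift
    (n : ℕ) (T : (Fin n → ZMod 2) → (Fin n → ZMod 2))
    (hT : ∀ v v' : Fin n → ZMod 2, hammingDist (T v) (T v') = hammingDist v v') :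
    ∃ π : Equiv.Perm (Fin n), ∀ (v : Fin n → ZMod 2) (i : Fin n),
      T v i = v (π i) + T 0 i := by
  classical
  set S : (Fin n → ZMod 2) → (Fin n → ZMod 2) := fun v i => T v i + T 0 i with hS
  have hSdist : ∀ v v', hammingDist (S v) (S v') = hammingDist v v' := by
    intro v v'
    rw [← hT v v']
    unfold hammingDist
    congr 1
    ext i
    simp only [hS, Finset.mem_filter]
    constructor <;> intro ⟨h1, h2⟩ <;> refine ⟨h1, fun hc => h2 ?_⟩
    · rw [hc]
    · have := congrArg (· + T 0 i) hc
      simpa [add_assoc, CharTwo.add_self_eq_zero] using this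
  have hS0 : S 0 = 0 := by
    funext i
    simp [hS, CharTwo.add_self_eq_zero]
  have hSnorm : ∀ v, hammingNorm (S v) = hammingNorm v :=  fun v => by
    calc hammingNorm (S v) = hammingDist (S v) (S 0) := by
          rw [hS0, hammingDist_zero_right]
      _ = hammingDist v 0 := hSdist v 0
      _ = hammingNorm v := hammingDist_zero_right v
  have hsingle : ∀ j : Fin n, ∃ k, S (Pi.single j 1) = Pi.single k 1 := by
    intro j
    apply norm_one_single
    rw [hSnorm, norm_single]
  choose f hf using hsingle
  have key : ∀ (v : Fin n → ZMod 2) (j : Fin n), S v (f j) = v j := by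
    intro v j
    have hd := hSdist v (Pi.single j 1)
    rw [hf j, hdist_single, hdist_single, hSnorm] at hd
    rcases zmod2_cases (S v (f j)) with h1 | h1 <;>
        rcases zmod2_cases (v j) with h2 | h2
    · rw [h1, h2]
    · exfalso
      simp only [h1, h2, if_pos, if_neg, zero_ne_one, if_false, if_true] at hd
      have hN : 1 ≤ hammingNorm v := by
        rw [Nat.one_le_iff_ne_zero, hammingNorm_ne_zero_iff]
        intro hv0
        rw [hv0] at h2
        simp at h2
      omega
    · exfalso
      simp only [h1, h2, if_pos, if_neg, zero_ne_one, if_false, if_true] at hd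
      have hN : 1 ≤ hammingNorm v := by
        rw [← hSnorm, Nat.one_le_iff_ne_zero, hammingNorm_ne_zero_iff]
        intro hv0
        rw [hv0] at h1
        simp at h1
      omega
    · rw [h1, h2]
  have finj : Function.Injective f := by
    intro j j' h
    have heq : (Pi.single j 1 : Fin n → ZMod 2) = Pi.single j' 1 := by
      have h0 : hammingDist (S (Pi.single j (1:ZMod 2))) (S (Pi.single j' 1)) = 0 := by
        rw [hf, hf, h, hammingDist_eq_zero]
      rw [hSdist, hammingDist_eq_zero] at h0
      exact h0
    by_contra hne
    have := congrFun heq j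
    rw [Pi.single_eq_same, Pi.single_eq_of_ne hne] at this
    exact one_ne_zero this
  have fbij : Function.Bijective f := Finite.injective_iff_bijective.mp finj
  refine ⟨(Equiv.ofBijective f fbij).symm, fun v i => ?_⟩
  have hfi : f ((Equiv.ofBijective f fbij).symm i) = i :=
    Equiv.ofBijective_apply_symm_apply f fbij i
  have hk := key v ((Equiv.ofBijective f fbij).symm i)
  rw [hfi] at hk
  have hSvi : S v i = T v i + T 0 i := rfl
  rw [hSvi] at hk
  have := congrArg (· + T 0 i) hk
  simpa [add_assoc, CharTwo.add_self_eq_zero] using this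
end

section
/- Let T̂ : 𝔽₂ⁿ → 𝔽₂ⁿ be a map that preserves both the Hamming distance and the Hamming weight (|T̂ v| = |v| for all v). Then for every list of pairwise distinct unity vectors e₁, ..., e_ℓ ∈ 𝔽₂ⁿ (0 ≤ ℓ ≤ n), the equality T̂(e₁ + ⋯ + e_ℓ) = T̂(e₁) + ⋯ + T̂(e_ℓ) holds. -/
/-!
Over `𝔽₂` a vector is determined by its support, and a sum `v` of `ℓ` distinct unity vectors
has weight `ℓ` and lies at distance `ℓ - 1` from each of its summands `e`. Hence `T̂ v` has
weight `ℓ` and each unity vector `T̂ e` lies at distance `ℓ - 1` from it; were the position of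
`T̂ e` outside the support of `T̂ v`, that distance would be `ℓ + 1`. So the support of `∑ T̂ e`,
which has `ℓ` elements because `T̂` is injective, is contained in the support of `T̂ v`, also of
size `ℓ`, and the two vectors coincide.
-/

open Finset

section

variable {ι : Type*}

theorem hammingDist_pi_single_of_apply_eq_zero [Fintype ι] [DecidableEq ι] {β : ι → Type*}
    [∀ i, Zero (β i)] [∀ i, DecidableEq (β i)] {v : ∀ i, β i} {j : ι} {a : β j} (hv : v j = 0)
    (ha : a ≠ 0) :
    hammingDist v (Pi.single j a) = hammingNorm v + 1 := by
  have hsupp : univ.filter (fun i => v i ≠ Pi.single j a i)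
      = insert j (univ.filter fun i => v i ≠ 0) := by
    ext i
    by_cases hij : i = j
    · subst hij
      simp [hv, ha.symm]
    · simp [hij]
  rw [hammingDist, hammingNorm, hsupp, card_insert_of_notMem (by simp [hv])]

theorem injective_of_forall_hammingDist_eq [Fintype ι] {β : ι → Type*} [∀ i, DecidableEq (β i)]
    {T : (∀ i, β i) → ∀ i, β i} (hT : ∀ v w, hammingDist (T v) (T w) = hammingDist v w) :
    Function.Injective T := fun v w h => by
  rw [← hammingDist_eq_zero, ← hT, h, hammingDist_self]

theorem eq_of_support_subset_of_hammingNorm_le [Fintype ι] {v w : ι → ZMod 2}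
    (hsub : ∀ i, w i ≠ 0 → v i ≠ 0) (hle : hammingNorm v ≤ hammingNorm w) : v = w := by
  have hsupp : univ.filter (fun i => w i ≠ 0) = univ.filter fun i => v i ≠ 0 :=
    eq_of_subset_of_card_le (fun i => by simpa using hsub i) hle
  have zmod_two_ext : ∀ x y : ZMod 2, (x ≠ 0 ↔ y ≠ 0) → x = y := by decide
  funext i
  exact zmod_two_ext _ _ (by simpa using (congrArg (i ∈ ·) hsupp).to_iff.symm)

theorem pi_single_left_injective_zmod_two [DecidableEq ι] :
    Function.Injective fun j : ι => (Pi.single j 1 : ι → ZMod 2) := fun i j h => by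
  simpa [Pi.single_apply, eq_comm] using congrFun h j

theorem exists_eq_pi_single_of_hammingNorm_eq_one [Fintype ι] [DecidableEq ι] {e : ι → ZMod 2}
    (he : hammingNorm e = 1) :
    ∃ j, e = Pi.single j 1 := by
  obtain ⟨j, hj⟩ := card_eq_one.mp he
  refine ⟨j, (eq_of_support_subset_of_hammingNorm_le (fun i hi => ?_) ?_).symm⟩
  · have : i ∈ univ.filter fun i => e i ≠ 0 := by simpa using hi
    rw [hj, mem_singleton] at this
    simp [this]
  · rw [he]
    simp [hammingNorm, Pi.single_apply, filter_eq']

theorem apply_ne_zero_iff_eq_pi_single_of_hammingNorm_eq_one [Fintype ι] [DecidableEq ι]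
    {e : ι → ZMod 2} (he : hammingNorm e = 1) (i : ι) :
    e i ≠ 0 ↔ e = Pi.single i 1 := by
  obtain ⟨j, rfl⟩ := exists_eq_pi_single_of_hammingNorm_eq_one he
  rw [pi_single_left_injective_zmod_two.eq_iff, Pi.single_apply]
  simp [eq_comm]

namespace List

variable [Fintype ι] [DecidableEq ι] {l : List (ι → ZMod 2)}

theorem sum_apply_of_hammingNorm_eq_one (hu : ∀ e ∈ l, hammingNorm e = 1) (hl : l.Nodup)
    (i : ι) :
    l.sum i = if Pi.single i 1 ∈ l then 1 else 0 := by
  calc l.sum i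
      = ∑ e ∈ l.toFinset, e i := by rw [← Finset.sum_apply, sum_toFinset _ hl, map_id']
    _ = ∑ e ∈ l.toFinset, if Pi.single i 1 = e then 1 else 0 := by
        refine Finset.sum_congr rfl fun e he => ?_
        have hi :=
          apply_ne_zero_iff_eq_pi_single_of_hammingNorm_eq_one (hu e (mem_toFinset.mp he)) i
        split_ifs with h
        · simp [← h]
        · exact not_not.mp fun hne => h (hi.mp hne).symm
    _ = if Pi.single i 1 ∈ l then 1 else 0 := by simp only [Finset.sum_ite_eq, mem_toFinset]

theorem hammingNorm_sum_of_hammingNorm_eq_one (hu : ∀ e ∈ l, hammingNorm e = 1) (hl : l.Nodup) :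
    hammingNorm l.sum = l.length := by
  have hsupp : univ.filter (fun i => l.sum i ≠ 0) = univ.filter fun i => Pi.single i 1 ∈ l := by
    ext i
    simp [sum_apply_of_hammingNorm_eq_one hu hl]
  have himage : (univ.filter fun i => Pi.single i 1 ∈ l).image (Pi.single · 1) = l.toFinset := by
    ext e
    simp only [Finset.mem_image, Finset.mem_filter, Finset.mem_univ, true_and, mem_toFinset]
    constructor
    · rintro ⟨j, hj, rfl⟩
      exact hj
    · intro he
      obtain ⟨j, rfl⟩ := exists_eq_pi_single_of_hammingNorm_eq_one (hu e he)
      exact ⟨j, he, rfl⟩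
  rw [hammingNorm, hsupp, ← toFinset_card_of_nodup hl, ← himage,
    card_image_of_injective _ pi_single_left_injective_zmod_two]

theorem hammingDist_sum_of_mem (hu : ∀ e ∈ l, hammingNorm e = 1) (hl : l.Nodup) {e : ι → ZMod 2}
    (he : e ∈ l) : hammingDist l.sum e = l.length - 1 := by
  rw [hammingDist_comm, hammingDist_eq_hammingNorm, ← sum_erase he, neg_add_cancel_left,
    hammingNorm_sum_of_hammingNorm_eq_one (fun e' he' => hu e' (mem_of_mem_erase he'))
      (hl.erase e), length_erase_of_mem he]

end List

end

theorem hat_T_additive_on_distinct_unity_vectors_general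
    (n : ℕ) (T : (Fin n → ZMod 2) → (Fin n → ZMod 2))
    (hdist : ∀ v v' : Fin n → ZMod 2, hammingDist (T v) (T v') = hammingDist v v')
    (hwt : ∀ v : Fin n → ZMod 2, hammingNorm (T v) = hammingNorm v)
    (l : List (Fin n → ZMod 2))
    (hunity : ∀ e ∈ l, hammingNorm e = 1)
    (hdistinct : l.Pairwise (· ≠ ·)) :
    T l.sum = (l.map T).sum := by
  have hunityT : ∀ e ∈ l.map T, hammingNorm e = 1 := by simpa [hwt] using hunity
  have hdistinctT : (l.map T).Nodup :=
    List.Nodup.map (injective_of_forall_hammingDist_eq hdist) hdistinct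
  refine eq_of_support_subset_of_hammingNorm_le (fun i hi => ?_) ?_
  · have hmem : Pi.single i 1 ∈ l.map T := by
      simpa [List.sum_apply_of_hammingNorm_eq_one hunityT hdistinctT] using hi
    obtain ⟨e, he, hTe⟩ := List.mem_map.mp hmem
    intro hzero
    have hfar := hammingDist_pi_single_of_apply_eq_zero hzero one_ne_zero
    rw [← hTe, hdist, hwt, List.hammingDist_sum_of_mem hunity hdistinct he,
      List.hammingNorm_sum_of_hammingNorm_eq_one hunity hdistinct] at hfar
    omega
  · rw [hwt, List.hammingNorm_sum_of_hammingNorm_eq_one hunity hdistinct,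
      List.hammingNorm_sum_of_hammingNorm_eq_one hunityT hdistinctT, List.length_map]

theorem hat_T_additive_on_distinct_unity_vectors
    (n : ℕ) (T : (Fin n → ZMod 2) → (Fin n → ZMod 2))
    (hdist : ∀ v v' : Fin n → ZMod 2, hammingDist (T v) (T v') = hammingDist v v')
    (hwt : ∀ v : Fin n → ZMod 2, hammingNorm (T v) = hammingNorm v)
    (l : List (Fin n → ZMod 2))
    (hunity : ∀ e ∈ l, hammingNorm e = 1)
    (hdistinct : l.Pairwise (· ≠ ·))
    (hlen : l.length ≤ n) :
    T l.sum = (l.map T).sum :=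
  hat_T_additive_on_distinct_unity_vectors_general n T hdist hwt l hunity hdistinct
end

section
/- Let T̂ : 𝔽₂ⁿ → 𝔽₂ⁿ be a map that preserves both the Hamming distance and the Hamming weight. Then T̂ is additive: T̂(v + v') = T̂(v) + T̂(v') for all v, v' ∈ 𝔽₂ⁿ (equivalently, T̂ is 𝔽₂-linear). -/
open Finset

private lemma zmod2_one_of_ne_zero : ∀ x : ZMod 2, x ≠ 0 → x = 1 := by decide

private lemma hammingNorm_single (n : ℕ) (i : Fin n) :
    hammingNorm ((Pi.single i 1 : Fin n → ZMod 2)) = 1 := by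
  unfold hammingNorm
  have : ({j | (Pi.single i 1 : Fin n → ZMod 2) j ≠ 0} : Finset (Fin n)) = {i} := by
    ext j
    simp only [mem_filter, mem_univ, true_and, mem_singleton]
    constructor
    · intro h
      by_contra hne
      exact h (Pi.single_eq_of_ne hne 1)
    · rintro rfl; simp
  rw [this, card_singleton]

private lemma norm_one_eq_single {n : ℕ} (u : Fin n → ZMod 2)
    (h : hammingNorm u = 1) : ∃ j, u = (Pi.single j 1 : Fin n → ZMod 2) := by
  unfold hammingNorm at h
  rw [card_eq_one] at h
  obtain ⟨j, hj⟩ := h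
  refine ⟨j, funext fun k => ?_⟩
  have hmem : ∀ k : Fin n, u k ≠ 0 ↔ k = j := by
    intro k
    rw [← mem_singleton, ← hj]
    simp
  by_cases hk : k = j
  · subst hk
    have : u k ≠ 0 := (hmem k).2 rfl
    rw [zmod2_one_of_ne_zero _ this, Pi.single_eq_same]
  · have : u k = 0 := by
      by_contra h'
      exact hk ((hmem k).1 h')
    rw [this, Pi.single_eq_of_ne hk]

private lemma dist_single_lt_iff {n : ℕ} (v : Fin n → ZMod 2) (i : Fin n) :
    v i = 1 ↔ hammingDist v ((Pi.single i 1 : Fin n → ZMod 2)) < hammingNorm v := by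
  unfold hammingDist hammingNorm
  have hset : ({j | v j ≠ (Pi.single i 1 : Fin n → ZMod 2) j} : Finset (Fin n)) =
      if v i = 1 then ({j | v j ≠ 0} : Finset (Fin n)) \ {i}
      else insert i ({j | v j ≠ 0} : Finset (Fin n)) := by
    by_cases hvi : v i = 1
    · simp only [hvi, if_true]
      ext j
      by_cases hj : j = i
      · subst hj; simp [hvi]
      · simp [Pi.single_eq_of_ne hj, hj]
    · simp only [hvi, if_false]
      have hvi0 : v i = 0 := by
        by_contra h'
        exact hvi (zmod2_one_of_ne_zero _ h')
      ext j
      by_cases hj : j = i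
      · subst hj; simp [hvi0]
      · simp [Pi.single_eq_of_ne hj, hj]
  rw [hset]
  by_cases hvi : v i = 1
  · simp only [hvi, if_true, true_iff]
    have hi : i ∈ ({j | v j ≠ 0} : Finset (Fin n)) := by
      simp [hvi]
    calc (({j | v j ≠ 0} : Finset (Fin n)) \ {i}).card
        < (({j | v j ≠ 0} : Finset (Fin n)) \ {i}).card + 1 := Nat.lt_succ_self _
      _ = ({j | v j ≠ 0} : Finset (Fin n)).card := by
          have h1 : 1 ≤ ({j | v j ≠ 0} : Finset (Fin n)).card :=
            card_pos.mpr ⟨i, hi⟩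
          rw [card_sdiff_of_subset (by simpa using hi)]
          simp only [card_singleton]
          omega
  · simp only [hvi, if_false, false_iff, not_lt]
    have hvi0 : v i = 0 := by
      by_contra h'; exact hvi (zmod2_one_of_ne_zero _ h')
    have hi : i ∉ ({j | v j ≠ 0} : Finset (Fin n)) := by simp [hvi0]
    rw [card_insert_of_notMem hi]
    omega

theorem dist_and_weight_preserving_is_additive
    (n : ℕ) (T : (Fin n → ZMod 2) → (Fin n → ZMod 2))
    (hdist : ∀ v v' : Fin n → ZMod 2, hammingDist (T v) (T v') = hammingDist v v')
    (hwt : ∀ v : Fin n → ZMod 2, hammingNorm (T v) = hammingNorm v) :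
    ∀ v v' : Fin n → ZMod 2, T (v + v') = T v + T v' := by
  have hTinj : Function.Injective T := fun a b h => by
    have := hdist a b
    rw [h, hammingDist_self] at this
    exact (hammingDist_eq_zero.mp this.symm)
  have hsingle : ∀ i : Fin n, ∃ j, T (Pi.single i 1 : Fin n → ZMod 2) = (Pi.single j 1 : Fin n → ZMod 2) := by
    intro i
    apply norm_one_eq_single
    rw [hwt, hammingNorm_single]
  choose σ hσ using hsingle
  have hσinj : Function.Injective σ := by
    intro i i' h
    apply_fun (fun k => (Pi.single k 1 : Fin n → ZMod 2)) at h
    rw [← hσ, ← hσ] at h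
    have := hTinj h
    by_contra hne
    have := congrFun this i
    rw [Pi.single_eq_of_ne hne] at this
    rw [Pi.single_eq_same] at this
    exact one_ne_zero this
  have hσsurj : Function.Surjective σ := Finite.surjective_of_injective hσinj
  have hcoord : ∀ (v : Fin n → ZMod 2) (i : Fin n), T v (σ i) = v i := by
    intro v i
    have key : T v (σ i) = 1 ↔ v i = 1 := by
      rw [dist_single_lt_iff (T v) (σ i), dist_single_lt_iff v i,
        ← hσ i, hdist, hwt]
    have h1 : ∀ x y : ZMod 2, (x = 1 ↔ y = 1) → x = y := by decide
    exact h1 _ _ key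
  intro v v'
  funext j
  obtain ⟨i, rfl⟩ := hσsurj j
  rw [Pi.add_apply, hcoord, hcoord, hcoord, Pi.add_apply]
end

section
/- Let F be a field, n ≥ 1 a natural number, and σ : F → F a bijection. Let T : Fⁿ → Fⁿ be the componentwise map T(u₁,...,uₙ) = (σ(u₁),...,σ(uₙ)). Suppose there exist invertible linear maps Q, R : Fⁿ → Fⁿ such that hammingDist w₁ w₂ = hammingDist (Q w₁) (R (T w₂)) for all w₁, w₂ ∈ Fⁿ. Then σ is an invertible linear map of F: σ(0) = 0 and σ(x) = σ(1) · x for all x ∈ F, with σ(1) ≠ 0. -/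
theorem field_permutation_linear_decodability_forces_affine
    (F : Type*) [Field F] [DecidableEq F] (n : ℕ) (hn : 1 ≤ n)
    (σ : F → F) (hσ : Function.Bijective σ)
    (Q R : (Fin n → F) ≃ₗ[F] (Fin n → F))
    (h : ∀ w₁ w₂ : Fin n → F,
      hammingDist w₁ w₂ = hammingDist (Q w₁) (R (fun i => σ (w₂ i)))) :
    σ 0 = 0 ∧ (∀ x : F, σ x = σ 1 * x) ∧ σ 1 ≠ 0 := by
  have key : ∀ w : Fin n → F, (fun i => σ (w i)) = R.symm (Q w) := by
    intro w
    have h0 := (h w w).symm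
    rw [hammingDist_self, hammingDist_eq_zero] at h0
    have : R.symm (Q w) = R.symm (R (fun i => σ (w i))) := by rw [← h0]
    simpa using this.symm
  set i0 : Fin n := ⟨0, hn⟩
  have hσ0 : σ 0 = 0 := by
    have := congrFun (key 0) i0
    simpa using this
  have hlin : ∀ x : F, σ x = σ 1 * x := by
    intro x
    have h1 := congrFun (key (fun _ => (1 : F))) i0
    have hx := congrFun (key (fun _ => x)) i0
    have hs : (fun _ : Fin n => x) = x • (fun _ : Fin n => (1 : F)) := by
      funext i; simp
    rw [hs] at hx
    simp only [map_smul] at hx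
    rw [hx, Pi.smul_apply, smul_eq_mul, ← h1, mul_comm]
  refine ⟨hσ0, hlin, fun hc => ?_⟩
  have : σ 1 = σ 0 := by rw [hσ0, hc]
  exact one_ne_zero (hσ.injective this)
end
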